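/- arXiv:2410.08139 — 2 statements merged into one kernel-verified Lean document; each statement's English description precedes it below -/
import Mathlib

section
/- Let d be a positive even integer, let S be a simplicial complex on a finite vertex set V disjoint from the set [d] = {1, ..., d}, and suppose every face of S has cardinality at most d/2. Define Γ = { F ∪ G : F ∈ S, G ⊆ {1, ..., d - 2|F|} }. Then Γ is a simplicial complex, and for every i ≥ 0 the number of faces of Γ of cardinality i equals Σ_{j=0}^{i} f_{j-1}(S) · C(d - 2j, i - j), where f_{j-1}(S) is the number of faces of S of cardinality j and C(a,b) is the binomial coefficient. -/
/-!
Write `X = [d]`. Every face `A = F ∪ G` of `Γ` decomposes uniquely as `F = A \ X ∈ S` and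
`G = A ∩ X`, so `Γ` is the disjoint union over `F ∈ S` of the intervals `[F, F ∪ B F]` with
`B F = {1, …, d - 2|F|}`. Down-closure follows because `B` is antitone in `F`, and the
interval of `F` contributes `C(|B F|, i - |F|)` faces of cardinality `i`.
-/

open Finset

variable {α : Type*} [DecidableEq α]

section Decomposition

variable {X F G : Finset α}

lemma union_sdiff_eq_of_disjoint_of_subset (hF : Disjoint F X) (hG : G ⊆ X) :
    (F ∪ G) \ X = F := by
  rw [union_sdiff_distrib, sdiff_eq_self_of_disjoint hF, sdiff_eq_empty_iff_subset.2 hG,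
    union_empty]

lemma union_inter_eq_of_disjoint_of_subset (hF : Disjoint F X) (hG : G ⊆ X) :
    (F ∪ G) ∩ X = G := by
  rw [union_inter_distrib_right, disjoint_iff_inter_eq_empty.1 hF, inter_eq_left.2 hG,
    empty_union]

end Decomposition

lemma card_filter_card_image_union_powerset {F B : Finset α} (h : Disjoint F B) (i : ℕ) :
    #{A ∈ B.powerset.image (F ∪ ·) | #A = i} = if #F ≤ i then (#B).choose (i - #F) else 0 := by
  have hinj : Set.InjOn (F ∪ ·) (B.powerset : Set (Finset α)) := by
    intro G₁ hG₁ G₂ hG₂ hG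
    simp only [coe_powerset, Set.mem_preimage, Set.mem_powerset_iff, coe_subset] at hG₁ hG₂
    rw [← union_sdiff_cancel_left (h.mono_right hG₁), ← union_sdiff_cancel_left
      (h.mono_right hG₂)]
    exact congrArg (· \ F) hG
  have hcard : ∀ G ∈ B.powerset, #(F ∪ G) = #F + #G := fun G hG =>
    card_union_of_disjoint (h.mono_right (mem_powerset.1 hG))
  rw [filter_image, card_image_of_injOn (hinj.mono (filter_subset _ _))]
  split_ifs with hle
  · rw [← card_powersetCard, powersetCard_eq_filter]
    exact congrArg card (filter_congr fun G hG => by rw [hcard G hG]; omega)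
  · exact card_eq_zero.2 (filter_eq_empty_iff.2 fun G hG => by rw [hcard G hG]; omega)

def boolDecomposition (S : Finset (Finset α)) (B : Finset α → Finset α) : Finset (Finset α) :=
  S.biUnion fun F => (B F).powerset.image (F ∪ ·)

section BoolDecomposition

variable {S : Finset (Finset α)} {B : Finset α → Finset α} {X : Finset α}

lemma mem_boolDecomposition {A : Finset α} :
    A ∈ boolDecomposition S B ↔ ∃ F ∈ S, ∃ G ⊆ B F, F ∪ G = A := by
  simp [boolDecomposition]

lemma empty_mem_boolDecomposition (hS : ∅ ∈ S) : ∅ ∈ boolDecomposition S B :=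
  mem_boolDecomposition.2 ⟨∅, hS, ∅, empty_subset _, empty_union _⟩

lemma isLowerSet_boolDecomposition (hS : IsLowerSet (S : Set (Finset α)))
    (hSX : ∀ F ∈ S, Disjoint F X) (hBX : ∀ F, B F ⊆ X) (hB : Antitone B) :
    IsLowerSet (boolDecomposition S B : Set (Finset α)) := by
  rintro A A' hA'A hA
  obtain ⟨F, hF, G, hG, rfl⟩ := mem_boolDecomposition.1 hA
  have hdiff : A' \ X ⊆ F := by
    simpa only [union_sdiff_eq_of_disjoint_of_subset (hSX F hF) (hG.trans (hBX F))]
      using sdiff_subset_sdiff hA'A (subset_refl X)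
  have hinter : A' ∩ X ⊆ G := by
    simpa only [union_inter_eq_of_disjoint_of_subset (hSX F hF) (hG.trans (hBX F))]
      using inter_subset_inter_right (u := X) hA'A
  exact mem_boolDecomposition.2 ⟨A' \ X, hS hdiff hF, A' ∩ X, hinter.trans (hG.trans (hB hdiff)),
    sdiff_union_inter A' X⟩

lemma card_filter_card_boolDecomposition (hSX : ∀ F ∈ S, Disjoint F X) (hBX : ∀ F, B F ⊆ X)
    (i : ℕ) :
    #{A ∈ boolDecomposition S B | #A = i} = ∑ F ∈ S with #F ≤ i, (#(B F)).choose (i - #F) := by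
  have hpair : (S : Set (Finset α)).PairwiseDisjoint
      fun F => {A ∈ (B F).powerset.image (F ∪ ·) | #A = i} := by
    intro F₁ hF₁ F₂ hF₂ hne
    refine disjoint_left.2 fun A hA₁ hA₂ => hne ?_
    simp only [mem_filter, mem_image, mem_powerset] at hA₁ hA₂
    obtain ⟨⟨G₁, hG₁, rfl⟩, -⟩ := hA₁
    obtain ⟨⟨G₂, hG₂, hA⟩, -⟩ := hA₂
    rw [← union_sdiff_eq_of_disjoint_of_subset (hSX F₁ hF₁) (hG₁.trans (hBX F₁)), ← hA,
      union_sdiff_eq_of_disjoint_of_subset (hSX F₂ hF₂) (hG₂.trans (hBX F₂))]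
  rw [boolDecomposition, filter_biUnion, card_biUnion hpair, sum_filter]
  exact sum_congr rfl fun F hF =>
    card_filter_card_image_union_powerset ((hSX F hF).mono_right (hBX F)) i

end BoolDecomposition

lemma sum_filter_le_eq_sum_range {ι M : Type*} [AddCommMonoid M] (s : Finset ι) (f : ι → ℕ)
    (g : ℕ → M) (i : ℕ) :
    ∑ x ∈ s with f x ≤ i, g (f x) = ∑ j ∈ range (i + 1), #{x ∈ s | f x = j} • g j := by
  rw [← sum_fiberwise_of_maps_to (t := range (i + 1)) (g := f)
    fun x hx => mem_range_succ_iff.2 (mem_filter.1 hx).2]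
  refine sum_congr rfl fun j hj => ?_
  rw [filter_filter, sum_congr rfl fun x hx => by rw [(mem_filter.1 hx).2.2], sum_const]
  congr 2
  exact filter_congr fun x _ => by have := mem_range_succ_iff.1 hj; omega

theorem boolean_decomposition_face_count_general (d : ℕ)
    (S : Finset (Finset ℕ))
    (hSempty : ∅ ∈ S) (hSdown : ∀ F ∈ S, ∀ G ⊆ F, G ∈ S)
    (hdisj : ∀ F ∈ S, ∀ v ∈ F, v ∉ Finset.Icc 1 d)
    (Γ : Finset (Finset ℕ))
    (hΓ : Γ = S.biUnion (fun F =>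
      (Finset.Icc 1 (d - 2 * F.card)).powerset.image (fun G => F ∪ G))) :
    (∅ ∈ Γ ∧ ∀ F ∈ Γ, ∀ G ⊆ F, G ∈ Γ) ∧
    ∀ i : ℕ, (Γ.filter (fun A => A.card = i)).card
      = ∑ j ∈ Finset.range (i + 1),
          (S.filter (fun F => F.card = j)).card * Nat.choose (d - 2 * j) (i - j) := by
  change Γ = boolDecomposition S fun F => Icc 1 (d - 2 * #F) at hΓ
  subst hΓ
  have hSX : ∀ F ∈ S, Disjoint F (Icc 1 d) := fun F hF => disjoint_left.2 (hdisj F hF)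
  have hBX : ∀ F : Finset ℕ, Icc 1 (d - 2 * #F) ⊆ Icc 1 d := fun F =>
    Icc_subset_Icc_right (Nat.sub_le _ _)
  have hB : Antitone fun F : Finset ℕ => Icc 1 (d - 2 * #F) := fun F₁ F₂ h =>
    Icc_subset_Icc_right (by have := card_le_card h; omega)
  refine ⟨⟨empty_mem_boolDecomposition hSempty, fun A hA A' hA'A =>
    isLowerSet_boolDecomposition (fun F F' h hF => hSdown F hF F' h) hSX hBX hB hA'A hA⟩,
    fun i => ?_⟩
  simp only [card_filter_card_boolDecomposition hSX hBX, Nat.card_Icc, Nat.add_sub_cancel,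
    sum_filter_le_eq_sum_range S card (fun j => (d - 2 * j).choose (i - j)), smul_eq_mul]

/-- Let `d` be a positive even integer and `S` a simplicial complex on a
finite vertex set disjoint from `[d] = {1, ..., d}` whose faces all have cardinality at
most `d/2`.  Then `Γ = { F ∪ G : F ∈ S, G ⊆ {1, ..., d - 2|F|} }` is a simplicial
complex, and for every `i ≥ 0` the number of faces of `Γ` of cardinality `i` equals
`∑_{j=0}^{i} f_{j-1}(S) · C(d - 2j, i - j)`. -/
theorem boolean_decomposition_face_count (d : ℕ) (hd : 0 < d) (hde : Even d)
    (S : Finset (Finset ℕ))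
    (hSempty : ∅ ∈ S) (hSdown : ∀ F ∈ S, ∀ G ⊆ F, G ∈ S)
    (hdisj : ∀ F ∈ S, ∀ v ∈ F, v ∉ Finset.Icc 1 d)
    (hdim : ∀ F ∈ S, F.card ≤ d / 2)
    (Γ : Finset (Finset ℕ))
    (hΓ : Γ = S.biUnion (fun F =>
      (Finset.Icc 1 (d - 2 * F.card)).powerset.image (fun G => F ∪ G))) :
    (∅ ∈ Γ ∧ ∀ F ∈ Γ, ∀ G ⊆ F, G ∈ Γ) ∧
    ∀ i : ℕ, (Γ.filter (fun A => A.card = i)).card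
      = ∑ j ∈ Finset.range (i + 1),
          (S.filter (fun F => F.card = j)).card * Nat.choose (d - 2 * j) (i - j) :=
  boolean_decomposition_face_count_general d S hSempty hSdown hdisj Γ hΓ
end

section
/- Let d be a positive even integer, let S be a simplicial complex on a finite vertex set V disjoint from the set [d] = {1, ..., d}, and suppose every face of S has cardinality at most d/2. Define Γ = { F ∪ G : F ∈ S, G ⊆ {1, ..., d - 2|F|} }. Then Σ_{i=0}^{d} f_{i-1}(Γ) x^i = Σ_{j=0}^{d/2} f_{j-1}(S) x^j (x+1)^{d-2j} as polynomials. Consequently, if the coefficient vector (f_{-1}(Γ), ..., f_{d-1}(Γ)) is the h-vector of a palindromic polynomial of degree d, then the gamma vector of that polynomial equals the f-vector of S. -/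
open Polynomial Finset

/-! Every face `A = F ∪ G` of `Γ` splits uniquely, since `F` avoids `[d]` and `G ⊆ [d]`, so `Γ` is
the disjoint union over `F ∈ S` of Boolean intervals `[F, F ∪ [d - 2|F|]]`; the interval of `F`
contributes `x^|F| (x+1)^(d-2|F|)` to the f-polynomial. The gamma vector is then read off by
unitriangularity: the coefficient of `x^j` in `∑ γ_k x^k (x+1)^(d-2k)` is `γ_j` plus terms with
`k < j`. -/

theorem sum_range_natCast_card_filter_mul {ι R : Type*} [CommSemiring R] {n : ℕ}
    (s : Finset ι) (f : ι → ℕ) (g : ℕ → R) (hf : ∀ i ∈ s, f i ≤ n) :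
    ∑ k ∈ range (n + 1), (#{i ∈ s | f i = k} : R) * g k = ∑ i ∈ s, g (f i) := by
  rw [← sum_fiberwise_of_maps_to (fun i hi => mem_range.mpr (Nat.lt_succ_of_le (hf i hi)))]
  refine sum_congr rfl fun k _ => ?_
  rw [sum_congr rfl fun i hi => congrArg g (mem_filter.mp hi).2, sum_const, nsmul_eq_mul]

section UnionPowerset

variable {α R : Type*} [DecidableEq α] [CommSemiring R]

theorem union_sdiff_eq_left_of_disjoint_of_subset {F G B : Finset α} (hF : Disjoint F B)
    (hG : G ⊆ B) : (F ∪ G) \ B = F := by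
  rw [union_sdiff_distrib, sdiff_eq_self_of_disjoint hF, sdiff_eq_empty_iff_subset.mpr hG,
    union_empty]

theorem sum_pow_card_image_union_powerset {F T : Finset α} (h : Disjoint F T) (x : R) :
    ∑ A ∈ T.powerset.image (F ∪ ·), x ^ #A = x ^ #F * (x + 1) ^ #T := by
  have hdisj : ∀ G ∈ T.powerset, Disjoint F G := fun G hG => h.mono_right (mem_powerset.mp hG)
  rw [sum_image fun G hG G' hG' hGG' => by
    rw [← union_sdiff_cancel_left (hdisj G hG), ← union_sdiff_cancel_left (hdisj G' hG'),
      show F ∪ G = F ∪ G' from hGG']]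
  rw [sum_congr rfl fun G hG => by rw [card_union_of_disjoint (hdisj G hG), pow_add], ← mul_sum,
    ← sum_pow_mul_eq_add_pow]
  simp

theorem sum_pow_card_biUnion_image_union_powerset {S : Finset (Finset α)} {B : Finset α}
    {T : Finset α → Finset α} (hS : ∀ F ∈ S, Disjoint F B) (hT : ∀ F ∈ S, T F ⊆ B) (x : R) :
    ∑ A ∈ S.biUnion (fun F => (T F).powerset.image (F ∪ ·)), x ^ #A
      = ∑ F ∈ S, x ^ #F * (x + 1) ^ #(T F) := by
  have hblocks : (S : Set (Finset α)).PairwiseDisjoint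
      fun F => (T F).powerset.image (F ∪ ·) := by
    intro F hF F' hF' hne
    simp only [Function.onFun, disjoint_left, mem_image, mem_powerset]
    rintro _ ⟨G, hG, rfl⟩ ⟨G', hG', hGG'⟩
    apply hne
    rw [← union_sdiff_eq_left_of_disjoint_of_subset (hS F hF) (hG.trans (hT F hF)),
      ← union_sdiff_eq_left_of_disjoint_of_subset (hS F' hF') (hG'.trans (hT F' hF')), hGG']
  rw [sum_biUnion hblocks]
  exact sum_congr rfl fun F hF =>
    sum_pow_card_image_union_powerset ((hS F hF).mono_right (hT F hF)) x

theorem card_le_of_mem_biUnion_image_union_powerset {S : Finset (Finset α)}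
    {T : Finset α → Finset α} {n : ℕ} (hn : ∀ F ∈ S, #F + #(T F) ≤ n) {A : Finset α}
    (hA : A ∈ S.biUnion fun F => (T F).powerset.image (F ∪ ·)) : #A ≤ n := by
  simp only [mem_biUnion, mem_image, mem_powerset] at hA
  obtain ⟨F, hF, G, hG, rfl⟩ := hA
  exact (card_union_le F G).trans ((Nat.add_le_add_left (card_le_card hG) _).trans (hn F hF))

end UnionPowerset

section GammaBasis

variable {R : Type*} [CommRing R]

theorem coeff_C_mul_X_pow_mul_X_add_one_pow (b : R) (m n k : ℕ) :
    (C b * X ^ m * (X + 1) ^ n).coeff k = if m ≤ k then b * (n.choose (k - m) : R) else 0 := by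
  rw [mul_right_comm, coeff_mul_X_pow', coeff_C_mul, coeff_X_add_one_pow]

theorem eq_zero_of_coeff_sum_C_mul_X_pow_mul_X_add_one_pow_eq_zero {s : Finset ℕ} {e : ℕ → ℕ}
    {a : ℕ → R} (h : ∀ j ∈ s, (∑ k ∈ s, C (a k) * X ^ k * (X + 1) ^ e k).coeff j = 0) :
    ∀ j ∈ s, a j = 0 := by
  intro j
  induction j using Nat.strong_induction_on with
  | _ j ih =>
    intro hj
    have hcoeff := h j hj
    rw [finsetSum_coeff, sum_eq_single j] at hcoeff
    · simpa [coeff_C_mul_X_pow_mul_X_add_one_pow] using hcoeff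
    · intro k hk hkj
      rcases lt_or_gt_of_ne hkj with hlt | hgt
      · simp [ih k hlt hk]
      · simp [coeff_C_mul_X_pow_mul_X_add_one_pow, Nat.not_le_of_lt hgt]
    · exact fun hj' => (hj' hj).elim

theorem eq_of_coeff_sum_C_mul_X_pow_mul_X_add_one_pow_eq {s : Finset ℕ} {e : ℕ → ℕ}
    {a b : ℕ → R} (h : ∀ j ∈ s, (∑ k ∈ s, C (a k) * X ^ k * (X + 1) ^ e k).coeff j
      = (∑ k ∈ s, C (b k) * X ^ k * (X + 1) ^ e k).coeff j) :
    ∀ j ∈ s, a j = b j := by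
  refine fun j hj => sub_eq_zero.mp
    (eq_zero_of_coeff_sum_C_mul_X_pow_mul_X_add_one_pow_eq_zero (e := e) (a := a - b)
      (fun i hi => ?_) j hj)
  simp only [Pi.sub_apply, map_sub, sub_mul, sum_sub_distrib, coeff_sub, h i hi, sub_self]

end GammaBasis

theorem boolean_decomposition_gamma_general (d : ℕ)
    (S : Finset (Finset ℕ))
    (hdisj : ∀ F ∈ S, ∀ v ∈ F, v ∉ Finset.Icc 1 d)
    (hdim : ∀ F ∈ S, F.card ≤ d / 2)
    (Γ : Finset (Finset ℕ))
    (hΓ : Γ = S.biUnion (fun F =>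
      (Finset.Icc 1 (d - 2 * F.card)).powerset.image (fun G => F ∪ G))) :
    ((∑ i ∈ Finset.range (d + 1),
        C (((Γ.filter (fun A => A.card = i)).card : ℝ)) * X ^ i)
      = ∑ j ∈ Finset.range (d / 2 + 1),
          C (((S.filter (fun F => F.card = j)).card : ℝ)) * X ^ j * (X + 1) ^ (d - 2 * j)) ∧
    (∀ h : Polynomial ℝ,
      (∀ k ≤ d, h.coeff k = h.coeff (d - k)) →
      (∀ i ≤ d, h.coeff i = ((Γ.filter (fun A => A.card = i)).card : ℝ)) →
      ∀ γ : ℕ → ℝ,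
        h = ∑ j ∈ Finset.range (d / 2 + 1), C (γ j) * X ^ j * (X + 1) ^ (d - 2 * j) →
        ∀ j ≤ d / 2, γ j = ((S.filter (fun F => F.card = j)).card : ℝ)) := by
  have hΓcard : ∀ A ∈ Γ, #A ≤ d := fun A hA =>
    card_le_of_mem_biUnion_image_union_powerset (fun F hF => by
      have := hdim F hF; simp only [Nat.card_Icc]; omega) (hΓ ▸ hA)
  have hfpoly : (∑ i ∈ range (d + 1), C ((#{A ∈ Γ | #A = i} : ℕ) : ℝ) * X ^ i)
      = ∑ j ∈ range (d / 2 + 1),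
          C ((#{F ∈ S | #F = j} : ℕ) : ℝ) * X ^ j * (X + 1) ^ (d - 2 * j) := by
    simp only [map_natCast, mul_assoc]
    rw [sum_range_natCast_card_filter_mul Γ card _ hΓcard,
      sum_range_natCast_card_filter_mul S card _ hdim, hΓ,
      sum_pow_card_biUnion_image_union_powerset (B := Icc 1 d)
        (fun F hF => disjoint_left.mpr (hdisj F hF))
        (fun F _ => Icc_subset_Icc_right (Nat.sub_le d _))]
    simp only [Nat.card_Icc, Nat.add_sub_cancel]
  refine ⟨hfpoly, fun h _ hcoeff γ hγ j hj => ?_⟩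
  refine eq_of_coeff_sum_C_mul_X_pow_mul_X_add_one_pow_eq (e := (d - 2 * ·)) (a := γ)
    (b := fun k => (#{F ∈ S | #F = k} : ℝ)) (fun i hi => ?_) j
    (mem_range.mpr (Nat.lt_succ_of_le hj))
  have hid : i ≤ d := by have := mem_range.mp hi; omega
  rw [← hγ, hcoeff i hid, ← hfpoly]
  simp [Nat.lt_succ_of_le hid]

/-- With `S` and `Γ = { F ∪ G : F ∈ S, G ⊆ {1, ..., d - 2|F|} }` as in the
Boolean decomposition, one has the polynomial identity
`∑_{i=0}^{d} f_{i-1}(Γ) x^i = ∑_{j=0}^{d/2} f_{j-1}(S) x^j (x+1)^{d-2j}`.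
Consequently, if `(f_{-1}(Γ), ..., f_{d-1}(Γ))` is the coefficient vector of a
palindromic polynomial `h` of degree `d`, then the gamma vector of `h` equals the
f-vector of `S`. -/
theorem boolean_decomposition_gamma (d : ℕ) (hd : 0 < d) (hde : Even d)
    (S : Finset (Finset ℕ))
    (hSempty : ∅ ∈ S) (hSdown : ∀ F ∈ S, ∀ G ⊆ F, G ∈ S)
    (hdisj : ∀ F ∈ S, ∀ v ∈ F, v ∉ Finset.Icc 1 d)
    (hdim : ∀ F ∈ S, F.card ≤ d / 2)
    (Γ : Finset (Finset ℕ))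
    (hΓ : Γ = S.biUnion (fun F =>
      (Finset.Icc 1 (d - 2 * F.card)).powerset.image (fun G => F ∪ G))) :
    ((∑ i ∈ Finset.range (d + 1),
        C (((Γ.filter (fun A => A.card = i)).card : ℝ)) * X ^ i)
      = ∑ j ∈ Finset.range (d / 2 + 1),
          C (((S.filter (fun F => F.card = j)).card : ℝ)) * X ^ j * (X + 1) ^ (d - 2 * j)) ∧
    (∀ h : Polynomial ℝ,
      (∀ k ≤ d, h.coeff k = h.coeff (d - k)) →
      (∀ i ≤ d, h.coeff i = ((Γ.filter (fun A => A.card = i)).card : ℝ)) →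
      ∀ γ : ℕ → ℝ,
        h = ∑ j ∈ Finset.range (d / 2 + 1), C (γ j) * X ^ j * (X + 1) ^ (d - 2 * j) →
        ∀ j ≤ d / 2, γ j = ((S.filter (fun F => F.card = j)).card : ℝ)) :=
  boolean_decomposition_gamma_general d S hdisj hdim Γ hΓ
end
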